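/- Let 1 ≤ p ≤ q < ∞. The discrete Morrey space ℓ^p_q is complete with respect to the norm ‖·‖_{ℓ^p_q}: every Cauchy sequence (x^{(n)})_{n∈ℕ} in ℓ^p_q (i.e., for every ε > 0 there is n_ε with ‖x^{(i)} − x^{(j)}‖_{ℓ^p_q} < ε for all i, j ≥ n_ε) converges in the norm ‖·‖_{ℓ^p_q} to some x ∈ ℓ^p_q. -/

import Mathlib

open scoped ENNReal NNReal BigOperators

/-- The discrete "ball" `S_{m,N} = {m-N, …, m+N}` as a finite set of integers. -/
noncomputable def S (m : ℤ) (N : ℕ) : Finset ℤ := Finset.Icc (m - N) (m + N)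

/-- The discrete Morrey norm `‖x‖_{ℓ^p_q}`. -/
noncomputable def morreyNorm (p q : ℝ) (x : ℤ → ℂ) : ℝ≥0∞ :=
  ⨆ (m : ℤ) (N : ℕ),
    (2 * (N : ℝ≥0∞) + 1) ^ (1 / q - 1 / p) *
      (∑ k ∈ S m N, (‖x k‖₊ : ℝ≥0∞) ^ p) ^ (1 / p)

/-! Completeness follows the proof for `ℓ^p`: the Morrey norm dominates every `|x_k|`
(take `N = 0`), so a Cauchy sequence converges pointwise. Each term of the supremum is a finite
expression, hence continuous under pointwise convergence; so the Morrey norm is lower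
semicontinuous, and the Cauchy estimate passes to the limit. -/

open Filter Topology

namespace Morrey

variable {p q : ℝ}

noncomputable def localNorm (p q : ℝ) (m : ℤ) (N : ℕ) (x : ℤ → ℂ) : ℝ≥0∞ :=
  (2 * (N : ℝ≥0∞) + 1) ^ (1 / q - 1 / p) * (∑ k ∈ S m N, (‖x k‖₊ : ℝ≥0∞) ^ p) ^ (1 / p)

theorem localNorm_le_morreyNorm (m : ℤ) (N : ℕ) (x : ℤ → ℂ) :
    localNorm p q m N x ≤ morreyNorm p q x :=
  le_iSup₂ (f := fun m N => localNorm p q m N x) m N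

theorem localNorm_zero_eq (hp : p ≠ 0) (x : ℤ → ℂ) (k : ℤ) :
    localNorm p q k 0 x = ‖x k‖₊ := by
  have hS : S k 0 = {k} := by simp [S]
  simp only [localNorm, hS, Nat.cast_zero, mul_zero, zero_add, ENNReal.one_rpow, one_mul,
    Finset.sum_singleton, ← ENNReal.rpow_mul, mul_one_div_cancel hp, ENNReal.rpow_one]

theorem nnnorm_apply_le_morreyNorm (hp : p ≠ 0) (x : ℤ → ℂ) (k : ℤ) :
    (‖x k‖₊ : ℝ≥0∞) ≤ morreyNorm p q x :=
  localNorm_zero_eq hp x k ▸ localNorm_le_morreyNorm k 0 x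

theorem localNorm_add_le (hp : 1 ≤ p) (m : ℤ) (N : ℕ) (u v : ℤ → ℂ) :
    localNorm p q m N (u + v) ≤ localNorm p q m N u + localNorm p q m N v := by
  rw [localNorm, localNorm, localNorm, ← mul_add]
  gcongr
  calc (∑ k ∈ S m N, (‖(u + v) k‖₊ : ℝ≥0∞) ^ p) ^ (1 / p)
      ≤ (∑ k ∈ S m N, ((‖u k‖₊ : ℝ≥0∞) + ‖v k‖₊) ^ p) ^ (1 / p) := by
        gcongr with k
        exact_mod_cast nnnorm_add_le (u k) (v k)
    _ ≤ _ := ENNReal.Lp_add_le _ _ _ hp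

theorem morreyNorm_add_le (hp : 1 ≤ p) (u v : ℤ → ℂ) :
    morreyNorm p q (u + v) ≤ morreyNorm p q u + morreyNorm p q v :=
  iSup₂_le fun m N => (localNorm_add_le hp m N u v).trans
    (add_le_add (localNorm_le_morreyNorm m N u) (localNorm_le_morreyNorm m N v))

theorem morreyNorm_neg (x : ℤ → ℂ) : morreyNorm p q (-x) = morreyNorm p q x := by
  simp only [morreyNorm, Pi.neg_apply, nnnorm_neg]

theorem tendsto_localNorm (m : ℤ) (N : ℕ) {f : ℕ → ℤ → ℂ} {g : ℤ → ℂ}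
    (h : ∀ k, Tendsto (fun j => f j k) atTop (𝓝 (g k))) :
    Tendsto (fun j => localNorm p q m N (f j)) atTop (𝓝 (localNorm p q m N g)) := by
  have hweight : (2 * (N : ℝ≥0∞) + 1) ^ (1 / q - 1 / p) ≠ ⊤ :=
    ENNReal.rpow_ne_top_of_ne_zero (by positivity) (by finiteness)
  refine ENNReal.Tendsto.const_mul ?_ (Or.inr hweight)
  refine (ENNReal.continuous_rpow_const.tendsto _).comp (tendsto_finsetSum _ fun k _ => ?_)
  exact (ENNReal.continuous_rpow_const.tendsto _).comp (ENNReal.tendsto_coe.2 (h k).nnnorm)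

theorem morreyNorm_le_of_tendsto {f : ℕ → ℤ → ℂ} {g : ℤ → ℂ} {c : ℝ≥0∞}
    (h : ∀ k, Tendsto (fun j => f j k) atTop (𝓝 (g k)))
    (hc : ∀ᶠ j in atTop, morreyNorm p q (f j) ≤ c) :
    morreyNorm p q g ≤ c :=
  iSup₂_le fun m N => le_of_tendsto (tendsto_localNorm m N h)
    (hc.mono fun _ hj => (localNorm_le_morreyNorm m N _).trans hj)

theorem cauchySeq_apply (hp : p ≠ 0) {X : ℕ → ℤ → ℂ}
    (hcauchy : ∀ ε : ℝ, 0 < ε → ∃ n₀ : ℕ, ∀ i j : ℕ, n₀ ≤ i → n₀ ≤ j →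
      morreyNorm p q (X i - X j) < ENNReal.ofReal ε) (k : ℤ) :
    CauchySeq fun n => X n k := by
  refine Metric.cauchySeq_iff.2 fun ε hε => ?_
  obtain ⟨n₀, hn₀⟩ := hcauchy ε hε
  refine ⟨n₀, fun i hi j hj => ?_⟩
  have h := (nnnorm_apply_le_morreyNorm hp _ k).trans_lt (hn₀ i j hi hj)
  rwa [← enorm_eq_nnnorm, ← ofReal_norm, ENNReal.ofReal_lt_ofReal_iff hε, Pi.sub_apply,
    ← dist_eq_norm] at h

end Morrey

open Morrey

theorem stmt3 (p q : ℝ) (hp : 1 ≤ p) (X : ℕ → ℤ → ℂ)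
    (hmem : ∀ n : ℕ, morreyNorm p q (X n) < ⊤)
    (hcauchy : ∀ ε : ℝ, 0 < ε → ∃ n₀ : ℕ, ∀ i j : ℕ, n₀ ≤ i → n₀ ≤ j →
      morreyNorm p q (X i - X j) < ENNReal.ofReal ε) :
    ∃ x : ℤ → ℂ, morreyNorm p q x < ⊤ ∧
      ∀ ε : ℝ, 0 < ε → ∃ n₀ : ℕ, ∀ n : ℕ, n₀ ≤ n →
        morreyNorm p q (X n - x) < ENNReal.ofReal ε := by
  have hp0 : p ≠ 0 := by positivity
  choose x hx using fun k => cauchySeq_tendsto_of_complete (cauchySeq_apply hp0 hcauchy k)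
  have hclose : ∀ ε : ℝ, 0 < ε → ∃ n₀ : ℕ, ∀ n, n₀ ≤ n →
      morreyNorm p q (X n - x) ≤ ENNReal.ofReal ε := by
    intro ε hε
    obtain ⟨n₀, hn₀⟩ := hcauchy ε hε
    refine ⟨n₀, fun n hn => morreyNorm_le_of_tendsto (fun k => tendsto_const_nhds.sub (hx k)) ?_⟩
    filter_upwards [eventually_ge_atTop n₀] with j hj using (hn₀ n j hn hj).le
  obtain ⟨n₁, hn₁⟩ := hclose 1 one_pos
  refine ⟨x, ?_, fun ε hε => ?_⟩
  · calc morreyNorm p q x = morreyNorm p q (X n₁ + -(X n₁ - x)) := by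
          rw [← sub_eq_add_neg, sub_sub_cancel]
      _ ≤ morreyNorm p q (X n₁) + morreyNorm p q (X n₁ - x) := by
        rw [← morreyNorm_neg (X n₁ - x)]; exact morreyNorm_add_le hp _ _
      _ < ⊤ := ENNReal.add_lt_top.2 ⟨hmem n₁, (hn₁ n₁ le_rfl).trans_lt ENNReal.ofReal_lt_top⟩
  · obtain ⟨n₀, hn₀⟩ := hclose (ε / 2) (half_pos hε)
    exact ⟨n₀, fun n hn =>
      (hn₀ n hn).trans_lt ((ENNReal.ofReal_lt_ofReal_iff hε).2 (half_lt_self hε))⟩
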